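/- arXiv:1212.6122 — 8 statements merged into one kernel-verified Lean document; each statement's English description precedes it below -/
import Mathlib

section
/- A topological space X is an Alster space (every cover of X by G-delta sets that is a G_K-cover, i.e., every compact subset of X is contained in some member, has a countable subcover) if and only if X satisfies the selection principle S_1(G_K, G): for every sequence (U_n) of G_K-covers of X by G-delta sets, one can choose U_n in U_n such that {U_n : n in N} covers X. -/
open Set Filter

/-- A `G_K`-cover: a family of Gδ subsets, not containing the whole space,
such that every compact subset is contained in some member. -/
def GKCover (X : Type*) [TopologicalSpace X] (U : Set (Set X)) : Prop :=
  (∀ u ∈ U, IsGδ u) ∧ univ ∉ U ∧ ∀ K : Set X, IsCompact K → ∃ u ∈ U, K ⊆ u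

/-- Alster space: every G_K-cover has a countable subfamily covering the space. -/
def Alster (X : Type*) [TopologicalSpace X] : Prop :=
  ∀ U : Set (Set X), GKCover X U → ∃ V ⊆ U, V.Countable ∧ ⋃₀ V = univ

/-- The selection principle S₁(G_K, G). -/
def S1GKG (X : Type*) [TopologicalSpace X] : Prop :=
  ∀ U : ℕ → Set (Set X), (∀ n, GKCover X (U n)) →
    ∃ f : ℕ → Set X, (∀ n, f n ∈ U n) ∧ (⋃ n, f n) = univ

theorem alster_iff_S1GKG (X : Type*) [TopologicalSpace X] :
    Alster X ↔ S1GKG X := by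
  constructor
  · intro hA U hU
    set W : Set (Set X) := {w | ∃ u : ℕ → Set X, (∀ n, u n ∈ U n) ∧ w = ⋂ n, u n} with hWdef
    have hWgk : GKCover X W := by
      refine ⟨?_, ?_, ?_⟩
      · rintro w ⟨u, hu, rfl⟩
        exact .iInter fun n => (hU n).1 _ (hu n)
      · rintro ⟨u, hu, h⟩
        have h0 : (univ : Set X) ⊆ u 0 := by rw [h]; exact iInter_subset u 0
        have : u 0 = univ := eq_univ_of_univ_subset h0
        exact (hU 0).2.1 (this ▸ hu 0)
      · intro K hK
        choose u hu hKu using fun n => (hU n).2.2 K hK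
        exact ⟨⋂ n, u n, ⟨u, hu, rfl⟩, subset_iInter hKu⟩
    obtain ⟨V, hVW, hVc, hVu⟩ := hA W hWgk
    rcases V.eq_empty_or_nonempty with hVe | hVne
    · have hX : (univ : Set X) = ∅ := by
        rw [← hVu, hVe, sUnion_empty]
      choose f hf _ using fun n => (hU n).2.2 ∅ isCompact_empty
      refine ⟨f, hf, Subset.antisymm (subset_univ _) ?_⟩
      rw [hX]; exact empty_subset _
    · obtain ⟨g, hg⟩ := hVc.exists_eq_range hVne
      have hgW : ∀ k, ∃ u : ℕ → Set X, (∀ n, u n ∈ U n) ∧ g k = ⋂ n, u n :=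
        fun k => hVW (hg ▸ mem_range_self k)
      choose u hu hrep using hgW
      refine ⟨fun n => u n n, fun n => hu n n, Subset.antisymm (subset_univ _) ?_⟩
      intro x _
      have hx : x ∈ ⋃₀ V := hVu ▸ mem_univ x
      rw [hg] at hx
      obtain ⟨w, ⟨k, rfl⟩, hxw⟩ := hx
      rw [hrep k] at hxw
      exact mem_iUnion.mpr ⟨k, mem_iInter.mp hxw k⟩
  · intro hS U hU
    obtain ⟨f, hf, hun⟩ := hS (fun _ => U) (fun _ => hU)
    exact ⟨range f, range_subset_iff.mpr hf, countable_range f, by rwa [sUnion_range]⟩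
end

section
/- If X satisfies S_1(G_K, G), then X^2 satisfies S_1(G_K, G); moreover, if every finite power of X satisfies S_1(G_K, G), then X satisfies S_1(G_K, G_Omega), where G_Omega is the family of G-delta covers U with X not in U such that every finite subset of X is contained in some member of U. -/
open Set Filter

/-- A Gδ ω-cover: Gδ sets, not containing the space, every finite subset
of the space lies in some member. -/
def GOmegaCover (X : Type*) [TopologicalSpace X] (U : Set (Set X)) : Prop :=
  (∀ u ∈ U, IsGδ u) ∧ univ ∉ U ∧ ∀ F : Set X, F.Finite → ∃ u ∈ U, F ⊆ u

def S1GKGOmega (X : Type*) [TopologicalSpace X] : Prop :=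
  ∀ U : ℕ → Set (Set X), (∀ n, GKCover X (U n)) →
    ∃ f : ℕ → Set X, (∀ n, f n ∈ U n) ∧ GOmegaCover X (Set.range f)

/-- The selection principle without the requirement `univ ∉ U n`. -/
lemma S1weak {X : Type*} [TopologicalSpace X] (h : S1GKG X)
    (U : ℕ → Set (Set X))
    (hgδ : ∀ n, ∀ u ∈ U n, IsGδ u)
    (hcov : ∀ n, ∀ K : Set X, IsCompact K → ∃ u ∈ U n, K ⊆ u) :
    ∃ f : ℕ → Set X, (∀ n, f n ∈ U n) ∧ (⋃ n, f n) = univ := by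
  classical
  by_cases huniv : ∃ n, univ ∈ U n
  · obtain ⟨n0, hn0⟩ := huniv
    have hne : ∀ n, (U n).Nonempty := fun n => by
      obtain ⟨u, hu, -⟩ := hcov n ∅ isCompact_empty
      exact ⟨u, hu⟩
    refine ⟨fun n => if n = n0 then univ else (hne n).some, fun n => ?_, ?_⟩
    · by_cases hcase : n = n0
      · simp [hcase, hn0]
      · simp [hcase, (hne n).some_mem]
    · apply eq_univ_of_univ_subset
      refine subset_iUnion_of_subset n0 ?_
      simp
  · push_neg at huniv
    exact h U fun n => ⟨hgδ n, huniv n, hcov n⟩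

/-- Gδ tube lemma. -/
lemma gdelta_tube {X Y : Type*} [TopologicalSpace X] [TopologicalSpace Y]
    {u : Set (X × Y)} (hu : IsGδ u) {K : Set X} {L : Set Y}
    (hK : IsCompact K) (hL : IsCompact L) (hKL : K ×ˢ L ⊆ u) :
    ∃ G H, IsGδ G ∧ IsGδ H ∧ K ⊆ G ∧ L ⊆ H ∧ G ×ˢ H ⊆ u := by
  obtain ⟨T, hTo, hTc, rfl⟩ := hu
  have htube : ∀ t ∈ T, ∃ (a : Set X) (b : Set Y),
      IsOpen a ∧ IsOpen b ∧ K ⊆ a ∧ L ⊆ b ∧ a ×ˢ b ⊆ t := fun t ht =>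
    generalized_tube_lemma hK hL (hTo t ht) (hKL.trans (sInter_subset_of_mem ht))
  choose a b hao hbo hKa hLb hab using htube
  refine ⟨⋂ t ∈ T, a t ‹_›, ⋂ t ∈ T, b t ‹_›,
    IsGδ.biInter hTc (fun t ht => (hao t ht).isGδ),
    IsGδ.biInter hTc (fun t ht => (hbo t ht).isGδ),
    subset_iInter₂ hKa, subset_iInter₂ hLb, ?_⟩
  rintro ⟨x, y⟩ ⟨hx, hy⟩
  intro t ht
  exact hab t ht ⟨mem_iInter₂.1 hx t ht, mem_iInter₂.1 hy t ht⟩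

lemma isGδ_preimage {X Y : Type*} [TopologicalSpace X] [TopologicalSpace Y]
    {f : X → Y} {s : Set Y} (hs : IsGδ s) (hf : Continuous f) : IsGδ (f ⁻¹' s) := by
  obtain ⟨T, hTo, hTc, rfl⟩ := hs
  rw [preimage_sInter]
  exact IsGδ.biInter hTc fun t ht => ((hTo t ht).preimage hf).isGδ

lemma S1GKG_square {X : Type*} [TopologicalSpace X] (hX : S1GKG X) : S1GKG (X × X) := by
  classical
  intro U hU
  set e : ℕ × ℕ ≃ ℕ := Nat.pairEquiv with he
  -- Stage A : for every column `j` and compact `K ⊆ X`, produce a Gδ set `w ⊇ K`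
  -- and selections `uu n ∈ U (e (j, n))` with `w ×ˢ univ ⊆ ⋃ n, uu n`.
  have stageA : ∀ (j : ℕ) (K : Set X), ∃ (w : Set X) (uu : ℕ → Set (X × X)),
      IsCompact K → (IsGδ w ∧ K ⊆ w ∧ (∀ n, uu n ∈ U (e (j, n))) ∧
        w ×ˢ (univ : Set X) ⊆ ⋃ n, uu n) := by
    intro j K
    by_cases hK : IsCompact K
    · set V : ℕ → Set (Set X) := fun n =>
        {H | IsGδ H ∧ ∃ G : Set X, IsGδ G ∧ K ⊆ G ∧ ∃ u ∈ U (e (j, n)), G ×ˢ H ⊆ u}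
        with hV
      have hVgδ : ∀ n, ∀ H ∈ V n, IsGδ H := fun n H hH => hH.1
      have hVcov : ∀ n, ∀ L : Set X, IsCompact L → ∃ H ∈ V n, L ⊆ H := by
        intro n L hL
        obtain ⟨u, hu, hKLu⟩ := (hU (e (j, n))).2.2 (K ×ˢ L) (hK.prod hL)
        obtain ⟨G, H, hG, hH, hKG, hLH, hGH⟩ :=
          gdelta_tube ((hU (e (j, n))).1 u hu) hK hL hKLu
        exact ⟨H, ⟨hH, G, hG, hKG, u, hu, hGH⟩, hLH⟩
      obtain ⟨H, hHmem, hHcov⟩ := S1weak hX V hVgδ hVcov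
      simp only [hV, mem_setOf_eq] at hHmem
      choose hHgδ G hGgδ hKG u hu hGH using hHmem
      refine ⟨⋂ n, G n, u, fun _ => ⟨IsGδ.iInter hGgδ, subset_iInter hKG, hu, ?_⟩⟩
      rintro ⟨x, y⟩ ⟨hx, -⟩
      have hy : y ∈ ⋃ n, H n := hHcov ▸ mem_univ y
      obtain ⟨n, hyn⟩ := mem_iUnion.1 hy
      exact mem_iUnion.2 ⟨n, hGH n ⟨mem_iInter.1 hx n, hyn⟩⟩
    · exact ⟨∅, fun _ => ∅, fun h => absurd h hK⟩
  choose w uu hstage using stageA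
  -- Stage B : apply the selection principle on `X` to the covers consisting of the `w j K`.
  set W : ℕ → Set (Set X) := fun j => {s | ∃ K : Set X, IsCompact K ∧ s = w j K} with hW
  have hWgδ : ∀ j, ∀ s ∈ W j, IsGδ s := by
    rintro j s ⟨K, hKc, rfl⟩
    exact (hstage j K hKc).1
  have hWcov : ∀ j, ∀ K : Set X, IsCompact K → ∃ s ∈ W j, K ⊆ s := by
    intro j K hKc
    exact ⟨w j K, ⟨K, hKc, rfl⟩, (hstage j K hKc).2.1⟩
  obtain ⟨w', hw'mem, hw'cov⟩ := S1weak hX W hWgδ hWcov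
  simp only [hW, mem_setOf_eq] at hw'mem
  choose K hKc hw'eq using hw'mem
  refine ⟨fun p => uu (e.symm p).1 (K (e.symm p).1) (e.symm p).2, fun p => ?_, ?_⟩
  · have := (hstage (e.symm p).1 (K (e.symm p).1) (hKc (e.symm p).1)).2.2.1 (e.symm p).2
    simpa only [Prod.mk.eta, Equiv.apply_symm_apply] using this
  · apply eq_univ_of_forall
    rintro ⟨x, y⟩
    have hx : x ∈ ⋃ j, w' j := hw'cov ▸ mem_univ x
    obtain ⟨j, hxj⟩ := mem_iUnion.1 hx
    rw [hw'eq j] at hxj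
    have hmem : (x, y) ∈ ⋃ n, uu j (K j) n :=
      (hstage j (K j) (hKc j)).2.2.2 ⟨hxj, mem_univ y⟩
    obtain ⟨n, hn⟩ := mem_iUnion.1 hmem
    refine mem_iUnion.2 ⟨e (j, n), ?_⟩
    simpa only [Equiv.symm_apply_apply] using hn

lemma S1GKG_omega {X : Type*} [TopologicalSpace X]
    (hX : ∀ n : ℕ, S1GKG (Fin n → X)) : S1GKGOmega X := by
  classical
  intro U hU
  by_cases hXne : Nonempty X
  swap
  · exfalso
    obtain ⟨u, hu, -⟩ := (hU 0).2.2 ∅ isCompact_empty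
    have huniv : u = univ := eq_univ_of_forall fun x => absurd ⟨x⟩ hXne
    exact (hU 0).2.1 (huniv ▸ hu)
  obtain ⟨x0⟩ := hXne
  set e : ℕ × ℕ ≃ ℕ := Nat.pairEquiv with he
  have stage : ∀ k : ℕ, ∃ h : ℕ → Set X, (∀ m, h m ∈ U (e (k, m))) ∧
      (⋃ m, {g : Fin (k + 1) → X | ∀ i, g i ∈ h m}) = univ := by
    intro k
    set cube : Set X → Set (Fin (k + 1) → X) := fun u => {g | ∀ i, g i ∈ u} with hcube
    set V : ℕ → Set (Set (Fin (k + 1) → X)) := fun m =>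
      {s | ∃ u ∈ U (e (k, m)), s = cube u} with hV
    have hgδ : ∀ m, ∀ s ∈ V m, IsGδ s := by
      rintro m s ⟨u, hu, rfl⟩
      have hc : cube u = ⋂ i, (fun g : Fin (k + 1) → X => g i) ⁻¹' u := by
        ext g; simp [hcube]
      rw [hc]
      exact IsGδ.iInter fun i => isGδ_preimage ((hU (e (k, m))).1 u hu) (continuous_apply i)
    have hcov : ∀ m, ∀ Kc : Set (Fin (k + 1) → X), IsCompact Kc → ∃ s ∈ V m, Kc ⊆ s := by
      intro m Kc hKc
      have hK' : IsCompact (⋃ i, (fun g : Fin (k + 1) → X => g i) '' Kc) :=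
        isCompact_iUnion fun i => hKc.image (continuous_apply i)
      obtain ⟨u, hu, hsub⟩ := (hU (e (k, m))).2.2 _ hK'
      refine ⟨cube u, ⟨u, hu, rfl⟩, fun g hg i => hsub ?_⟩
      exact mem_iUnion.2 ⟨i, mem_image_of_mem _ hg⟩
    obtain ⟨s, hsmem, hscov⟩ := S1weak (hX (k + 1)) V hgδ hcov
    simp only [hV, mem_setOf_eq] at hsmem
    choose u hu hseq using hsmem
    refine ⟨u, hu, ?_⟩
    have hEq : (⋃ m, {g : Fin (k + 1) → X | ∀ i, g i ∈ u m}) = ⋃ m, s m :=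
      iUnion_congr fun m => by rw [hseq m]
    exact hEq.trans hscov
  choose h hhU hhcov using stage
  set f : ℕ → Set X := fun p => h (e.symm p).1 (e.symm p).2 with hf
  have hfU : ∀ p, f p ∈ U p := by
    intro p
    have := hhU (e.symm p).1 (e.symm p).2
    simpa only [Prod.mk.eta, Equiv.apply_symm_apply] using this
  have hfe : ∀ j m, f (e (j, m)) = h j m := by
    intro j m
    simp only [hf, Equiv.symm_apply_apply]
  refine ⟨f, hfU, ?_, ?_, ?_⟩
  · rintro s ⟨p, rfl⟩
    exact (hU p).1 _ (hfU p)
  · rintro ⟨p, hp⟩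
    exact (hU p).2.1 (hp ▸ hfU p)
  · intro F hF
    rcases eq_empty_or_nonempty F with rfl | hFne
    · exact ⟨f 0, mem_range_self 0, empty_subset _⟩
    obtain ⟨x1, hx1⟩ := hFne
    set l : List X := hF.toFinset.toList with hl
    set k : ℕ := l.length with hk
    set g : Fin (k + 1) → X := fun i => l.getD i x1 with hg
    have hgcov : g ∈ ⋃ m, {g' : Fin (k + 1) → X | ∀ i, g' i ∈ h k m} := by
      rw [hhcov k]; exact mem_univ g
    obtain ⟨m, hm⟩ := mem_iUnion.1 hgcov
    refine ⟨h k m, ⟨e (k, m), hfe k m⟩, ?_⟩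
    intro x hx
    have hxl : x ∈ l := by
      rw [hl, Finset.mem_toList, Set.Finite.mem_toFinset]
      exact hx
    obtain ⟨i, hi, hgi⟩ := List.mem_iff_getElem.1 hxl
    have hik : i < k + 1 := by omega
    have hgval : g ⟨i, hik⟩ = x := by
      rw [hg]
      simp only
      rw [List.getD_eq_getElem l x1 (by omega)]
      exact hgi
    have := hm ⟨i, hik⟩
    rwa [hgval] at this

theorem S1GKG_square_and_omega (X : Type*) [TopologicalSpace X] :
    (S1GKG X → S1GKG (X × X)) ∧
    ((∀ n : ℕ, S1GKG (Fin n → X)) → S1GKGOmega X) :=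
  ⟨S1GKG_square, S1GKG_omega⟩
end

section
/- If a space X satisfies S_1(G_K, G), then for every sequence (U_n : n in N) of G_K-covers of X there is a sequence (V_n : n in N) such that each V_n is a subset of U_n of cardinality at most n, and every x in X belongs to the union of V_n for all but finitely many n. -/
open Set Filter

/-!
For each `k`, the sets `⋂ i ≥ k, g i` with `g i ∈ U i` form again a `G_K`-cover: they are
countable intersections of `G_δ` sets, each lies in a proper member `g k` of `U k`, and a compact
set is caught by intersecting members of the `U i` containing it. Applying `S_1(G_K, G)` to these
covers yields selections `c k i ∈ U i` such that every point lies in `⋂ i ≥ k, c k i` for some `k`;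
such a point lies in `c k n ∈ V n := {c k' n | k' < n}` for all `n > k`.
-/

theorem ncard_image_Iio_le {α : Type*} (f : ℕ → α) (n : ℕ) : (f '' Iio n).ncard ≤ n :=
  (ncard_image_le (finite_Iio n)).trans_eq (by simp [← Finset.coe_Iio])

def selectionTails {X : Type*} (U : ℕ → Set (Set X)) (k : ℕ) : Set (Set X) :=
  {s | ∃ g : ℕ → Set X, (∀ i, g i ∈ U i) ∧ s = ⋂ i ≥ k, g i}

theorem gkCover_selectionTails {X : Type*} [TopologicalSpace X] {U : ℕ → Set (Set X)}
    (hU : ∀ n, GKCover X (U n)) (k : ℕ) : GKCover X (selectionTails U k) := by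
  refine ⟨?_, ?_, fun K hK => ?_⟩
  · rintro _ ⟨g, hg, rfl⟩
    exact .iInter fun i => .iInter fun _ => (hU i).1 _ (hg i)
  · rintro ⟨g, hg, hg_univ⟩
    have : g k = univ := eq_univ_of_univ_subset (hg_univ ▸ iInter₂_subset k le_rfl)
    exact (hU k).2.1 (this ▸ hg k)
  · choose u hu hKu using fun i => (hU i).2.2 K hK
    exact ⟨⋂ i ≥ k, u i, ⟨u, hu, rfl⟩, subset_iInter₂ fun i _ => hKu i⟩

theorem S1GKG_small_finite_selections (X : Type*) [TopologicalSpace X]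
    (h : S1GKG X) (U : ℕ → Set (Set X)) (hU : ∀ n, GKCover X (U n)) :
    ∃ V : ℕ → Set (Set X),
      (∀ n, V n ⊆ U n ∧ (V n).Finite ∧ (V n).ncard ≤ n) ∧
      ∀ x : X, ∀ᶠ n in atTop, x ∈ ⋃₀ V n := by
  obtain ⟨f, hf, hf_cover⟩ := h _ (gkCover_selectionTails hU)
  choose c hc hfc using hf
  refine ⟨fun n => (c · n) '' Iio n, fun n => ⟨?_, (finite_Iio n).image _, ncard_image_Iio_le _ n⟩,
    fun x => ?_⟩
  · rintro _ ⟨k, -, rfl⟩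
    exact hc k n
  · obtain ⟨k, hk⟩ := mem_iUnion.mp (hf_cover.symm ▸ mem_univ x)
    rw [hfc k, mem_iInter₂] at hk
    filter_upwards [eventually_gt_atTop k] with n hn
    exact ⟨c k n, mem_image_of_mem _ hn, hk n hn.le⟩
end

section
/- If a space X satisfies S_1(G_K, G), then for every sequence (U_n : n in N) of G_K-covers of X there is a choice U_n in U_n such that for every x in X, for all but finitely many n, x belongs to the union of the sets U_j with T_n < j <= T_{n+1}, where T_n = n(n+1)/2 is the n-th triangular number. -/
open Set Filter

/-- The n-th triangular number. -/
def triangular (n : ℕ) : ℕ := n * (n + 1) / 2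

lemma triangular_succ (n : ℕ) : triangular (n + 1) = triangular n + (n + 1) := by
  show (n + 1) * (n + 1 + 1) / 2 = n * (n + 1) / 2 + (n + 1)
  rw [show (n + 1) * (n + 1 + 1) = n * (n + 1) + (n + 1) * 2 by ring,
    Nat.add_mul_div_right _ _ (by norm_num : (0:ℕ) < 2)]

lemma le_triangular (n : ℕ) : n ≤ triangular n := by
  induction n with
  | zero => simp [triangular]
  | succ n ih => rw [triangular_succ]; omega

lemma triangular_mono : Monotone triangular := by
  apply monotone_nat_of_le_succ
  intro n; rw [triangular_succ]; omega

open Classical in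
lemma blk_eq (n k : ℕ) (hk : k ≤ n) :
    Nat.findGreatest (fun m => triangular m < triangular n + 1 + k)
      (triangular n + 1 + k) = n := by
  rw [Nat.findGreatest_eq_iff]
  refine ⟨(le_triangular n).trans (by omega), fun _ => by omega, ?_⟩
  intro m hm _
  have h1 : triangular (n + 1) ≤ triangular m := triangular_mono hm
  rw [triangular_succ] at h1
  omega

theorem S1GKG_grouping (X : Type*) [TopologicalSpace X]
    (h : S1GKG X) (U : ℕ → Set (Set X)) (hU : ∀ n, GKCover X (U n)) :
    ∃ f : ℕ → Set X, (∀ n, f n ∈ U n) ∧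
      ∀ x : X, ∀ᶠ n in atTop,
        x ∈ ⋃ j ∈ Finset.Ioc (triangular n) (triangular (n + 1)), f j := by
  classical
  set W : Set (Set X) := { s | ∃ g : ℕ → Set X, (∀ j, g j ∈ U j) ∧ s = ⋂ j, g j } with hWdef
  have hWcov : GKCover X W := by
    refine ⟨?_, ?_, ?_⟩
    · rintro u ⟨g, hgmem, rfl⟩
      exact .iInter fun j => (hU j).1 _ (hgmem j)
    · rintro ⟨g, hgmem, hu⟩
      have h0 : g 0 = univ := eq_univ_of_univ_subset (hu ▸ iInter_subset g 0)
      exact (hU 0).2.1 (h0 ▸ hgmem 0)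
    · intro K hK
      choose g hgmem hKg using fun j => (hU j).2.2 K hK
      exact ⟨⋂ j, g j, ⟨g, hgmem, rfl⟩, subset_iInter hKg⟩
  obtain ⟨s, hsW, hscov⟩ := h (fun _ => W) (fun _ => hWcov)
  choose g hg hs using hsW
  refine ⟨fun j => g (j - triangular (Nat.findGreatest (fun m => triangular m < j) j) - 1) j,
    fun j => hg _ j, ?_⟩
  intro x
  obtain ⟨n0, hn0⟩ : ∃ n0, x ∈ s n0 := mem_iUnion.mp (hscov ▸ mem_univ x)
  rw [hs n0] at hn0
  filter_upwards [eventually_ge_atTop n0] with n hn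
  refine mem_iUnion₂.mpr ⟨triangular n + 1 + n0, ?_, ?_⟩
  · rw [Finset.mem_Ioc, triangular_succ]; omega
  · have hb := blk_eq n n0 hn
    simp only [hb]
    have hidx : triangular n + 1 + n0 - triangular n - 1 = n0 := by omega
    rw [hidx]
    exact mem_iInter.mp hn0 _
end

section
/- Every sigma-compact topological space satisfies S_1(G_K, G_Gamma): for every sequence (U_n) of G_K-covers by G-delta sets one can choose U_n in U_n such that every point of X belongs to U_n for all but finitely many n. -/
open Set Filter

/-- S₁(G_K, G_Γ): one can choose one member from each G_K-cover so that every
point belongs to all but finitely many of the chosen sets. -/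
def S1GKGGamma (X : Type*) [TopologicalSpace X] : Prop :=
  ∀ U : ℕ → Set (Set X), (∀ n, GKCover X (U n)) →
    ∃ f : ℕ → Set X, (∀ n, f n ∈ U n) ∧ ∀ x : X, ∀ᶠ n in atTop, x ∈ f n

theorem sigmaCompact_S1GKGGamma (X : Type*) [TopologicalSpace X]
    [SigmaCompactSpace X] : S1GKGGamma X := by
  intro U hU
  choose f hf hsub using fun n =>
    (hU n).2.2 (compactCovering X n) (isCompact_compactCovering X n)
  refine ⟨f, hf, fun x => ?_⟩
  obtain ⟨N, hN⟩ := exists_mem_compactCovering x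
  filter_upwards [eventually_ge_atTop N] with n hn
  exact hsub n (compactCovering_subset X hn hN)
end

section
/- Every Lindelöf P-space satisfies S_1(G_K, G_Gamma). -/
open Set Filter

/-- In a P-space, countable intersections of open sets are open (set version). -/
theorem myIsOpen_sInter {X : Type*} [TopologicalSpace X]
    (hP : ∀ s : ℕ → Set X, (∀ n, IsOpen (s n)) → IsOpen (⋂ n, s n))
    {S : Set (Set X)} (hSc : S.Countable) (hSo : ∀ t ∈ S, IsOpen t) :
    IsOpen (⋂₀ S) := by
  rcases S.eq_empty_or_nonempty with rfl | hne
  · simp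
  · obtain ⟨f, rfl⟩ := hSc.exists_eq_range hne
    rw [sInter_range]
    exact hP f fun n => hSo _ (mem_range_self n)

/-- Key extraction lemma: from a family of open sets such that every finite set lies
in a member (with a side predicate `P`), extract a countable subfamily that works for
all finite sets of size `≤ k`. -/
theorem aux_select {X : Type*} [TopologicalSpace X] [LindelofSpace X]
    (hP : ∀ s : ℕ → Set X, (∀ n, IsOpen (s n)) → IsOpen (⋂ n, s n))
    {ι : Type*} (w : ι → Set X) (hwo : ∀ i, IsOpen (w i)) :
    ∀ (k : ℕ) (P : ι → Prop), (∀ F : Finset X, ∃ i, P i ∧ (F : Set X) ⊆ w i) →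
      ∃ D : Set ι, D.Countable ∧ (∀ i ∈ D, P i) ∧
        ∀ F : Finset X, F.card ≤ k → ∃ i ∈ D, (F : Set X) ⊆ w i := by
  classical
  intro k
  induction k with
  | zero =>
    intro P h
    obtain ⟨i, hPi, -⟩ := h ∅
    refine ⟨{i}, countable_singleton _, by simpa using hPi, ?_⟩
    intro F hF
    have hFe : F = ∅ := Finset.card_eq_zero.mp (Nat.le_zero.mp hF)
    exact ⟨i, mem_singleton _, by simp [hFe]⟩
  | succ k IH =>
    intro P h
    have hx : ∀ x : X, ∀ F : Finset X, ∃ i, (P i ∧ x ∈ w i) ∧ (F : Set X) ⊆ w i := by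
      intro x F
      obtain ⟨i, hPi, hFi⟩ := h (insert x F)
      refine ⟨i, ⟨hPi, hFi (by simp)⟩, fun y hy => hFi ?_⟩
      simp only [Finset.coe_insert, mem_insert_iff]
      exact Or.inr hy
    choose D hDc hDP hDF using fun x : X => IH (fun i => P i ∧ x ∈ w i) (hx x)
    have hOo : ∀ x : X, IsOpen (⋂ i ∈ D x, w i) := by
      intro x
      rw [← sInter_image]
      refine myIsOpen_sInter hP ((hDc x).image w) ?_
      rintro t ⟨i, -, rfl⟩
      exact hwo i
    have hcov : (univ : Set X) ⊆ ⋃ x : X, ⋂ i ∈ D x, w i := by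
      intro x _
      exact mem_iUnion.mpr ⟨x, mem_iInter₂.mpr fun i hi => (hDP x i hi).2⟩
    obtain ⟨r, hrc, hrcov⟩ := isLindelof_univ.elim_countable_subcover _ hOo hcov
    obtain ⟨i₀, hPi₀, -⟩ := h ∅
    refine ⟨insert i₀ (⋃ x ∈ r, D x),
      ((hrc.biUnion fun x _ => hDc x).insert i₀), ?_, ?_⟩
    · rintro i hi
      rcases mem_insert_iff.mp hi with rfl | hi
      · exact hPi₀
      · obtain ⟨x, -, hix⟩ := mem_iUnion₂.mp hi
        exact (hDP x i hix).1
    · intro F hF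
      rcases F.eq_empty_or_nonempty with rfl | ⟨x', hx'⟩
      · exact ⟨i₀, mem_insert _ _, by simp⟩
      · obtain ⟨z, hz, hx'z⟩ := mem_iUnion₂.mp (hrcov (mem_univ x'))
        have hcard : (F.erase x').card ≤ k := by
          have h1 := Finset.card_erase_of_mem hx'
          have h2 : 1 ≤ F.card := Finset.card_pos.mpr ⟨x', hx'⟩
          omega
        obtain ⟨i, hiD, hGi⟩ := hDF z (F.erase x') hcard
        refine ⟨i, mem_insert_of_mem _ (mem_iUnion₂.mpr ⟨z, hz, hiD⟩), ?_⟩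
        intro y hy
        rcases eq_or_ne y x' with rfl | hne
        · exact mem_iInter₂.mp hx'z i hiD
        · exact hGi (Finset.mem_coe.mpr
            (Finset.mem_erase.mpr ⟨hne, Finset.mem_coe.mp hy⟩))

theorem lindelof_Pspace_S1GKGGamma (X : Type*) [TopologicalSpace X]
    [LindelofSpace X]
    (hP : ∀ s : ℕ → Set X, (∀ n, IsOpen (s n)) → IsOpen (⋂ n, s n)) :
    S1GKGGamma X := by
  classical
  intro U hU
  rcases isEmpty_or_nonempty X with hX | hX
  · -- empty space: any selection works
    have hsel : ∀ n : ℕ, ∃ u, u ∈ U n := by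
      intro n
      obtain ⟨u, hu, -⟩ := (hU n).2.2 ∅ isCompact_empty
      exact ⟨u, hu⟩
    choose f hf using hsel
    exact ⟨f, hf, fun x => isEmptyElim x⟩
  -- members are open
  have hGopen : ∀ n, ∀ u ∈ U n, IsOpen u := by
    intro n u hu
    obtain ⟨T, hTo, hTc, rfl⟩ := (hU n).1 u hu
    exact myIsOpen_sInter hP hTc hTo
  -- choose members above finite (hence compact) sets
  have hsel : ∀ (F : Finset X) (n : ℕ), ∃ u, u ∈ U n ∧ (F : Set X) ⊆ u := by
    intro F n
    obtain ⟨u, hu, hKu⟩ := (hU n).2.2 (F : Set X) F.finite_toSet.isCompact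
    exact ⟨u, hu, hKu⟩
  choose sel hsel1 hsel2 using hsel
  set wF : Finset X → Set X := fun F => ⋂ n, sel F n with hwFdef
  have hwFo : ∀ F, IsOpen (wF F) := fun F => hP _ fun n => hGopen n _ (hsel1 F n)
  have hwFsub : ∀ F : Finset X, (F : Set X) ⊆ wF F := fun F =>
    subset_iInter fun n => hsel2 F n
  have hwFne : ∀ F, wF F ≠ univ := by
    intro F h
    have h0 : sel F 0 = univ := by
      apply eq_univ_of_univ_subset
      rw [← h]
      exact iInter_subset _ 0
    exact (hU 0).2.1 (h0 ▸ hsel1 F 0)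
  -- countable ω-family
  have hkey : ∀ k : ℕ, ∃ D : Set (Finset X), D.Countable ∧
      ∀ F : Finset X, F.card ≤ k → ∃ G ∈ D, (F : Set X) ⊆ wF G := by
    intro k
    obtain ⟨D, hDc, -, hDF⟩ := aux_select hP wF hwFo k (fun _ => True)
      (fun F => ⟨F, trivial, hwFsub F⟩)
    exact ⟨D, hDc, hDF⟩
  choose Dk hDkc hDkF using hkey
  have hDsc : (⋃ k, Dk k).Countable := countable_iUnion hDkc
  have hDsne : (⋃ k, Dk k).Nonempty := by
    obtain ⟨G, hG, -⟩ := hDkF 0 ∅ (by simp)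
    exact ⟨G, mem_iUnion.mpr ⟨0, hG⟩⟩
  obtain ⟨g, hg⟩ := hDsc.exists_eq_range hDsne
  -- every finite set is inside wF (g m) for some m
  have hbase : ∀ F : Finset X, ∃ m : ℕ, (F : Set X) ⊆ wF (g m) := by
    intro F
    obtain ⟨G, hG, hFG⟩ := hDkF F.card F le_rfl
    have hGm : G ∈ range g := by
      rw [← hg]
      exact mem_iUnion.mpr ⟨F.card, hG⟩
    obtain ⟨m, rfl⟩ := hGm
    exact ⟨m, hFG⟩
  -- escape points witness properness
  have hpt : ∀ m : ℕ, ∃ q : X, q ∉ wF (g m) := fun m =>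
    (ne_univ_iff_exists_notMem _).mp (hwFne (g m))
  choose p hp using hpt
  -- arbitrarily large indices work
  have hlarge : ∀ (F : Finset X) (N : ℕ), ∃ m, N ≤ m ∧ (F : Set X) ⊆ wF (g m) := by
    intro F N
    obtain ⟨m, hm⟩ := hbase (F ∪ Finset.image p (Finset.range N))
    refine ⟨m, ?_, fun y hy => hm (by simp [hy])⟩
    by_contra hlt
    push_neg at hlt
    exact hp m (hm (by
      simp only [Finset.coe_union, mem_union, Finset.coe_image, mem_image,
        Finset.coe_range, Set.mem_Iio]
      exact Or.inr ⟨m, hlt, rfl⟩))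
  -- the γ-machinery
  set M : X → Set ℕ := fun x => {m | x ∈ wF (g m)} with hMdef
  set GS : Set ℕ → Set X := fun s => ⋃ k : ℕ, ⋂ m ∈ {m' ∈ s | k ≤ m'}, wF (g m)
    with hGSdef
  have hGSo : ∀ s, IsOpen (GS s) := by
    intro s
    refine isOpen_iUnion fun k => ?_
    rw [← sInter_image]
    refine myIsOpen_sInter hP (Set.Countable.image (Set.to_countable _) _) ?_
    rintro t ⟨m, -, rfl⟩
    exact hwFo (g m)
  have hGScov : (univ : Set X) ⊆ ⋃ x : X, GS (M x) := by
    intro x _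
    refine mem_iUnion.mpr ⟨x, mem_iUnion.mpr ⟨0, ?_⟩⟩
    exact mem_iInter₂.mpr fun m hm => hm.1
  obtain ⟨r, hrc, hrcov⟩ :=
    isLindelof_univ.elim_countable_subcover (fun x => GS (M x)) (fun x => hGSo _) hGScov
  have hrne : r.Nonempty := by
    obtain ⟨x₀⟩ := hX
    obtain ⟨z, hz, -⟩ := mem_iUnion₂.mp (hrcov (mem_univ x₀))
    exact ⟨z, hz⟩
  obtain ⟨xi, hxi⟩ := hrc.exists_eq_range hrne
  -- diagonal increasing sequence
  have hbig : ∀ (j N : ℕ), ∃ m, N ≤ m ∧ ∀ i ≤ j, xi i ∈ wF (g m) := by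
    intro j N
    obtain ⟨m, hmN, hmsub⟩ := hlarge (Finset.image xi (Finset.range (j + 1))) N
    refine ⟨m, hmN, fun i hi => hmsub ?_⟩
    simp only [Finset.coe_image, Finset.coe_range, mem_image, Set.mem_Iio]
    exact ⟨i, by omega, rfl⟩
  choose bigm hbig1 hbig2 using hbig
  set ms : ℕ → ℕ := fun k => Nat.rec (bigm 0 0) (fun k prev => bigm (k + 1) (prev + 1)) k
    with hmsdef
  have hms_succ : ∀ k, ms (k + 1) = bigm (k + 1) (ms k + 1) := fun k => rfl
  have hms_ge : ∀ k, k ≤ ms k := by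
    intro k
    induction k with
    | zero => exact Nat.zero_le _
    | succ k ih =>
      have := hbig1 (k + 1) (ms k + 1)
      rw [hms_succ]
      omega
  have hms_mem : ∀ k, ∀ i ≤ k, xi i ∈ wF (g (ms k)) := by
    intro k
    induction k with
    | zero => exact hbig2 0 0
    | succ k _ =>
      rw [hms_succ]
      exact hbig2 (k + 1) (ms k + 1)
  -- γ-cover property
  have hgamma : ∀ x : X, ∃ K : ℕ, ∀ k, K ≤ k → x ∈ wF (g (ms k)) := by
    intro x
    obtain ⟨z, hz, hxz⟩ := mem_iUnion₂.mp (hrcov (mem_univ x))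
    have hzr : z ∈ range xi := by rw [← hxi]; exact hz
    obtain ⟨i, rfl⟩ := hzr
    obtain ⟨k₀, hk₀⟩ := mem_iUnion.mp hxz
    refine ⟨max i k₀, fun k hk => ?_⟩
    have h1 : xi i ∈ wF (g (ms k)) := hms_mem k i (le_trans (le_max_left _ _) hk)
    have h2 : k₀ ≤ ms k := le_trans (le_trans (le_max_right _ _) hk) (hms_ge k)
    exact mem_iInter₂.mp hk₀ (ms k) ⟨h1, h2⟩
  -- final selection
  refine ⟨fun n => sel (g (ms n)) n, fun n => hsel1 _ n, ?_⟩
  intro x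
  obtain ⟨K, hK⟩ := hgamma x
  rw [eventually_atTop]
  refine ⟨K, fun n hn => ?_⟩
  have hx : x ∈ wF (g (ms n)) := hK n hn
  exact iInter_subset (fun n' => sel (g (ms n)) n') n hx
end

section
/- If X is a weakly Alster space and Y is a weakly Lindelöf space, then X × Y is weakly Lindelöf. -/
open Set

def WeaklyLindelof (Z : Type*) [TopologicalSpace Z] : Prop :=
  ∀ U : Set (Set Z), (∀ u ∈ U, IsOpen u) → ⋃₀ U = univ →
    ∃ V ⊆ U, V.Countable ∧ Dense (⋃₀ V)

/-- Weakly Alster: every family of Gδ sets such that each compact subset lies in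
some member has a countable subfamily with dense union. -/
def WeaklyAlster (X : Type*) [TopologicalSpace X] : Prop :=
  ∀ U : Set (Set X), (∀ u ∈ U, IsGδ u) →
    (∀ K : Set X, IsCompact K → ∃ u ∈ U, K ⊆ u) →
    ∃ V ⊆ U, V.Countable ∧ Dense (⋃₀ V)

theorem weaklyAlster_prod_weaklyLindelof (X Y : Type*) [TopologicalSpace X]
    [TopologicalSpace Y] (hX : WeaklyAlster X) (hY : WeaklyLindelof Y) :
    WeaklyLindelof (X × Y) := by
  intro U hUopen hUcov
  -- Key lemma: every compact set K ⊆ X is contained in a Gδ set G such that some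
  -- countable subfamily of U has union dense "over" G × Y.
  have key : ∀ K : Set X, IsCompact K →
      ∃ G : Set X, IsGδ G ∧ K ⊆ G ∧ ∃ V ⊆ U, V.Countable ∧
        G ×ˢ (univ : Set Y) ⊆ closure (⋃₀ V) := by
    intro K hK
    -- tube lemma construction for each y : Y
    have tube : ∀ y : Y, ∃ (A : Set X) (B : Set Y) (F : Set (Set (X × Y))),
        IsOpen A ∧ IsOpen B ∧ y ∈ B ∧ K ⊆ A ∧ F ⊆ U ∧ F.Countable ∧
        A ×ˢ B ⊆ ⋃₀ F := by
      intro y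
      have hbox : ∀ x ∈ K, ∃ a : Set X, ∃ b : Set Y, ∃ u : Set (X × Y),
          IsOpen a ∧ IsOpen b ∧ x ∈ a ∧ y ∈ b ∧ u ∈ U ∧ a ×ˢ b ⊆ u := by
        intro x _
        have hxy : (x, y) ∈ ⋃₀ U := by rw [hUcov]; trivial
        obtain ⟨u, huU, hxu⟩ := hxy
        obtain ⟨a, b, ha, hb, hxa, hyb, hab⟩ :=
          isOpen_prod_iff.mp (hUopen u huU) x y hxu
        exact ⟨a, b, u, ha, hb, hxa, hyb, huU, hab⟩
      choose! a b u ha hb hxa hyb huU hab using hbox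
      have hcov : K ⊆ ⋃ x ∈ K, a x := fun x hx => mem_biUnion hx (hxa x hx)
      obtain ⟨t, htK, htfin, htcov⟩ :=
        hK.elim_finite_subcover_image (fun x hx => ha x hx) hcov
      refine ⟨⋃ x ∈ t, a x, ⋂ x ∈ t, b x, u '' t, ?_, ?_, ?_, ?_, ?_, ?_, ?_⟩
      · exact isOpen_biUnion fun x hx => ha x (htK hx)
      · exact htfin.isOpen_biInter fun x hx => hb x (htK hx)
      · exact mem_biInter fun x hx => hyb x (htK hx)
      · exact htcov
      · rintro _ ⟨x, hx, rfl⟩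
        exact huU x (htK hx)
      · exact (htfin.image u).countable
      · rintro ⟨x', y'⟩ ⟨hx', hy'⟩
        obtain ⟨x, hx, hx'a⟩ := mem_iUnion₂.mp hx'
        refine ⟨u x, mem_image_of_mem u hx, hab x (htK hx) ⟨hx'a, ?_⟩⟩
        exact mem_iInter₂.mp hy' x hx
    choose A B F hAo hBo hyB hKA hFU hFc hABF using tube
    -- cover Y by the tubes' second factors and use weak Lindelöfness of Y
    obtain ⟨W, hWsub, hWc, hWd⟩ := hY (range B)
      (by rintro _ ⟨y, rfl⟩; exact hBo y)
      (eq_univ_iff_forall.mpr fun y => ⟨B y, mem_range_self y, hyB y⟩)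
    have hWex : ∀ w : W, ∃ y : Y, B y = (w : Set Y) := fun w => hWsub w.2
    choose f hf using hWex
    set S : Set Y := range f with hS
    have hSc : S.Countable := by
      have := hWc.to_subtype
      exact countable_range f
    -- the union of B over S equals the union of W, hence is dense
    have hDW : (⋃ y ∈ S, B y) = ⋃₀ W := by
      apply subset_antisymm
      · rintro z hz
        obtain ⟨y, hyS, hzB⟩ := mem_iUnion₂.mp hz
        obtain ⟨w, rfl⟩ := hyS
        exact ⟨(w : Set Y), w.2, by rwa [hf w] at hzB⟩
      · rintro z ⟨w, hwW, hzw⟩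
        refine mem_iUnion₂.mpr ⟨f ⟨w, hwW⟩, mem_range_self _, ?_⟩
        rwa [hf ⟨w, hwW⟩]
    have hDdense : Dense (⋃ y ∈ S, B y) := by rw [hDW]; exact hWd
    refine ⟨⋂ y ∈ S, A y, ?_, ?_, ⋃ y ∈ S, F y, ?_, ?_, ?_⟩
    · exact IsGδ.biInter hSc fun y _ => (hAo y).isGδ
    · exact fun x hx => mem_biInter fun y _ => hKA y hx
    · exact iUnion₂_subset fun y _ => hFU y
    · exact hSc.biUnion fun y _ => hFc y
    · -- G × Y ⊆ closure of the chosen union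
      have h1 : (⋂ y ∈ S, A y) ×ˢ (⋃ y ∈ S, B y) ⊆ ⋃₀ ⋃ y ∈ S, F y := by
        rintro ⟨x, z⟩ ⟨hxG, hzD⟩
        obtain ⟨y, hyS, hzB⟩ := mem_iUnion₂.mp hzD
        have hxA : x ∈ A y := mem_iInter₂.mp hxG y hyS
        have := hABF y ⟨hxA, hzB⟩
        exact sUnion_subset_sUnion (subset_biUnion_of_mem hyS) this
      calc (⋂ y ∈ S, A y) ×ˢ (univ : Set Y)
          ⊆ closure ((⋂ y ∈ S, A y) ×ˢ (⋃ y ∈ S, B y)) := by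
            rw [closure_prod_eq, hDdense.closure_eq]
            exact prod_mono subset_closure (subset_univ _)
        _ ⊆ closure (⋃₀ ⋃ y ∈ S, F y) := closure_mono h1
  -- Apply weak Alster to the family of such Gδ sets
  set 𝒢 : Set (Set X) := {G | IsGδ G ∧ ∃ V ⊆ U, V.Countable ∧
      G ×ˢ (univ : Set Y) ⊆ closure (⋃₀ V)} with h𝒢
  obtain ⟨T, hTsub, hTc, hTd⟩ := hX 𝒢 (fun G hG => hG.1)
    (fun K hK => by
      obtain ⟨G, h1, h2, h3⟩ := key K hK
      exact ⟨G, ⟨h1, h3⟩, h2⟩)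
  have hch : ∀ G ∈ T, ∃ V ⊆ U, V.Countable ∧
      G ×ˢ (univ : Set Y) ⊆ closure (⋃₀ V) := fun G hG => (hTsub hG).2
  choose! V hVU hVc hVd using hch
  refine ⟨⋃ G ∈ T, V G, iUnion₂_subset hVU, hTc.biUnion hVc, ?_⟩
  rw [dense_iff_closure_eq]
  have h1 : (⋃₀ T) ×ˢ (univ : Set Y) ⊆ closure (⋃₀ ⋃ G ∈ T, V G) := by
    rintro ⟨x, z⟩ ⟨hx, -⟩
    obtain ⟨G, hGT, hxG⟩ := hx
    exact closure_mono (sUnion_subset_sUnion (subset_biUnion_of_mem hGT))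
      (hVd G hGT ⟨hxG, trivial⟩)
  have h2 : closure ((⋃₀ T) ×ˢ (univ : Set Y)) = univ := by
    rw [closure_prod_eq, hTd.closure_eq, closure_univ, univ_prod_univ]
  refine univ_subset_iff.mp ?_
  calc (univ : Set (X × Y)) = closure ((⋃₀ T) ×ˢ (univ : Set Y)) := h2.symm
    _ ⊆ closure (closure (⋃₀ ⋃ G ∈ T, V G)) := closure_mono h1
    _ = closure (⋃₀ ⋃ G ∈ T, V G) := closure_closure
end

section
/- Every compact Rothberger space is productively weakly Rothberger: if X is compact Rothberger and Y is weakly Rothberger, then X × Y is weakly Rothberger. -/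
open Set

def Rothberger (X : Type*) [TopologicalSpace X] : Prop :=
  ∀ U : ℕ → Set (Set X),
    (∀ n, (∀ u ∈ U n, IsOpen u) ∧ ⋃₀ U n = univ) →
    ∃ f : ℕ → Set X, (∀ n, f n ∈ U n) ∧ (⋃ n, f n) = univ

def WeaklyRothberger (Z : Type*) [TopologicalSpace Z] : Prop :=
  ∀ U : ℕ → Set (Set Z),
    (∀ n, (∀ u ∈ U n, IsOpen u) ∧ ⋃₀ U n = univ) →
    ∃ f : ℕ → Set Z, (∀ n, f n ∈ U n) ∧ Dense (⋃ n, f n)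

theorem compact_rothberger_productively_weaklyRothberger
    (X : Type*) [TopologicalSpace X] [CompactSpace X] (hX : Rothberger X)
    (Y : Type*) [TopologicalSpace Y] (hY : WeaklyRothberger Y) :
    WeaklyRothberger (X × Y) := by
  intro U hU
  -- X and Y are nonempty (otherwise Rothberger/WeaklyRothberger fail for the empty covers)
  have hXne : Nonempty X := by
    by_contra h
    rw [not_nonempty_iff] at h
    obtain ⟨f, hf, -⟩ := hX (fun _ => (∅ : Set (Set X)))
      (fun n => ⟨fun u hu => (notMem_empty u hu).elim, by ext x; exact h.elim x⟩)
    exact notMem_empty _ (hf 0)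
  have hYne : Nonempty Y := by
    by_contra h
    rw [not_nonempty_iff] at h
    obtain ⟨f, hf, -⟩ := hY (fun _ => (∅ : Set (Set Y)))
      (fun n => ⟨fun u hu => (notMem_empty u hu).elim, by ext y; exact h.elim y⟩)
    exact notMem_empty _ (hf 0)
  obtain ⟨x0⟩ := hXne
  obtain ⟨y0⟩ := hYne
  -- a default selection from each U n
  have hdn : ∀ n, ∃ u, u ∈ U n := by
    intro n
    have : (x0, y0) ∈ ⋃₀ U n := by rw [(hU n).2]; trivial
    obtain ⟨u, hu, -⟩ := this
    exact ⟨u, hu⟩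
  choose d hd using hdn
  set p : ℕ × ℕ ≃ ℕ := Nat.pairEquiv with hp
  -- Key step: for each column k and each point y, a finite selection from the
  -- covers U (p (k, i)) covers a full open tube around y.
  have key : ∀ (k : ℕ) (y : Y), ∃ V : Set Y, IsOpen V ∧ y ∈ V ∧
      ∃ (T : Finset ℕ) (f : ℕ → Set (X × Y)), (∀ i ∈ T, f i ∈ U (p (k, i))) ∧
        univ ×ˢ V ⊆ ⋃ i ∈ T, f i := by
    intro k y
    set W : ℕ → Set (Set X) := fun i => (fun u => (fun x => (x, y)) ⁻¹' u) '' U (p (k, i))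
      with hW
    have hWprop : ∀ i, (∀ w ∈ W i, IsOpen w) ∧ ⋃₀ W i = univ := by
      intro i
      constructor
      · rintro w ⟨u, hu, rfl⟩
        exact ((hU _).1 u hu).preimage (Continuous.prodMk_left y)
      · apply eq_univ_of_forall
        intro x
        have : (x, y) ∈ ⋃₀ U (p (k, i)) := by rw [(hU _).2]; trivial
        obtain ⟨u, hu, hxu⟩ := this
        exact ⟨_, ⟨u, hu, rfl⟩, hxu⟩
    obtain ⟨g, hg, hgU⟩ := hX W hWprop
    choose u hu hgu using hg
    -- finite subcover by compactness of X
    have hsub : (univ : Set X) ⊆ ⋃ i, (fun x => (x, y)) ⁻¹' (u i) := by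
      rw [← hgU]
      exact iUnion_mono fun i => (hgu i).symm.subset
    obtain ⟨T, hT⟩ := isCompact_univ.elim_finite_subcover
      (fun i => (fun x => (x, y)) ⁻¹' (u i))
      (fun i => ((hU _).1 _ (hu i)).preimage (Continuous.prodMk_left y)) hsub
    have hopen : IsOpen (⋃ i ∈ T, u i) := isOpen_biUnion fun i _ => (hU _).1 _ (hu i)
    have htube : (univ : Set X) ×ˢ ({y} : Set Y) ⊆ ⋃ i ∈ T, u i := by
      rintro ⟨x, y'⟩ ⟨-, hy'⟩
      rcases hy' with rfl
      have hx : x ∈ ⋃ i ∈ T, (fun x => (x, y')) ⁻¹' (u i) := hT (mem_univ x)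
      obtain ⟨i, hiT, hxi⟩ := mem_iUnion₂.mp hx
      exact mem_iUnion₂.mpr ⟨i, hiT, hxi⟩
    obtain ⟨A, V, -, hVopen, hA, hyV, hAV⟩ :=
      generalized_tube_lemma isCompact_univ isCompact_singleton hopen htube
    refine ⟨V, hVopen, hyV rfl, T, u, fun i _ => hu i, ?_⟩
    rintro ⟨x, y'⟩ ⟨-, hy'⟩
    exact hAV ⟨hA (mem_univ x), hy'⟩
  -- covers of Y
  set 𝒱 : ℕ → Set (Set Y) := fun k => {V | IsOpen V ∧
      ∃ (T : Finset ℕ) (f : ℕ → Set (X × Y)), (∀ i ∈ T, f i ∈ U (p (k, i))) ∧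
        univ ×ˢ V ⊆ ⋃ i ∈ T, f i} with h𝒱
  have h𝒱prop : ∀ k, (∀ v ∈ 𝒱 k, IsOpen v) ∧ ⋃₀ 𝒱 k = univ := by
    intro k
    constructor
    · exact fun v hv => hv.1
    · apply eq_univ_of_forall
      intro y
      obtain ⟨V, hVo, hyV, T, f, hf, hVs⟩ := key k y
      exact ⟨V, ⟨hVo, T, f, hf, hVs⟩, hyV⟩
  obtain ⟨Wsel, hWsel, hWdense⟩ := hY 𝒱 h𝒱prop
  choose T F hF hFsub using fun k => (hWsel k).2
  -- assemble the selection for X × Y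
  refine ⟨fun n => if h : (p.symm n).2 ∈ T (p.symm n).1
      then F (p.symm n).1 (p.symm n).2 else d n, ?_, ?_⟩
  · intro n
    dsimp only
    by_cases h : (p.symm n).2 ∈ T (p.symm n).1
    · rw [dif_pos h]
      have := hF (p.symm n).1 (p.symm n).2 h
      rwa [Prod.mk.eta, Equiv.apply_symm_apply] at this
    · rw [dif_neg h]
      exact hd n
  · have hdense : Dense ((univ : Set X) ×ˢ ⋃ k, Wsel k) := dense_univ.prod hWdense
    refine Dense.mono ?_ hdense
    rintro ⟨x, y⟩ ⟨-, hy⟩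
    obtain ⟨k, hk⟩ := mem_iUnion.mp hy
    have hxy : (x, y) ∈ ⋃ i ∈ T k, F k i := hFsub k ⟨mem_univ x, hk⟩
    obtain ⟨i, hiT, hxi⟩ := mem_iUnion₂.mp hxy
    refine mem_iUnion.mpr ⟨p (k, i), ?_⟩
    have hsymm : p.symm (p (k, i)) = (k, i) := p.symm_apply_apply _
    simp only [hsymm]
    rw [dif_pos hiT]
    exact hxi
end
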